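/- Let L ≥ 1, β > 0, and let γ_1 ≥ γ_2 ≥ … ≥ γ_L > 0. Let β_j ≥ 0 and p_j ≥ 0 for j = 1,…,L, with β_j · p_j > 0 for at least one j. Define R(ρ) := Σ_{j=1}^L β_j · log(1 + p_j · f(γ_j,β,ρ)) for ρ > 0. If ρ* > 0 is a critical point of R (i.e., R is differentiable at ρ* with derivative zero), then Σ_{j=1}^L (β_j · p_j · f(γ_j,β,ρ*)² / (1 + p_j · f(γ_j,β,ρ*))) · (ρ*/β − 1/γ_j) = 0. -/

import Mathlib

/-!
Differentiating the closed form of `g` and using its defining quadratic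
`ρ g² + (ρ + β − 1) g = 1` gives `g' = −g²(1+g)/(1+ρg²)`, and then
`∂f/∂ρ = −κ · f² · (ρ/β − 1/γ)` with `κ = 2β²g³/(1+ρg²)³ > 0` independent of `γ`.
Hence `R'(ρ) = −κ · Σⱼ βⱼ pⱼ fⱼ²/(1 + pⱼ fⱼ) · (ρ/β − 1/γⱼ)`, and `R'(ρ*) = 0` forces the sum to vanish.
-/

/-- The deterministic equivalent `g(β,ρ)`: the unique positive solution of
`g·(ρ + β/(1+g)) = 1`, given in closed form. -/
noncomputable def gfun (β ρ : ℝ) : ℝ :=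
  ((1 - ρ - β) + Real.sqrt ((ρ + β - 1) ^ 2 + 4 * ρ)) / (2 * ρ)

/-- The limiting SINR coefficient `f(γ,β,ρ)` at effective SNR γ. -/
noncomputable def ffun (γ β ρ : ℝ) : ℝ :=
  gfun β ρ * (γ + (γ * ρ / β) * (1 + gfun β ρ) ^ 2) / (γ + (1 + gfun β ρ) ^ 2)

open Real

section gfun

variable {β ρ : ℝ}

lemma discr_pos (hρ : 0 < ρ) : 0 < (ρ + β - 1) ^ 2 + 4 * ρ := by positivity

lemma gfun_pos (hρ : 0 < ρ) : 0 < gfun β ρ := by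
  have hlt : ρ + β - 1 < √((ρ + β - 1) ^ 2 + 4 * ρ) :=
    lt_sqrt_of_sq_lt (by linarith)
  unfold gfun
  exact div_pos (by linarith) (by positivity)

lemma sqrt_discr_eq (hρ : 0 < ρ) :
    √((ρ + β - 1) ^ 2 + 4 * ρ) = 2 * ρ * gfun β ρ + (ρ + β - 1) := by
  unfold gfun; field_simp; ring

lemma gfun_quadratic (hρ : 0 < ρ) :
    ρ * gfun β ρ ^ 2 + (ρ + β - 1) * gfun β ρ = 1 := by
  have hsq := sq_sqrt (discr_pos (β := β) hρ).le
  rw [sqrt_discr_eq hρ] at hsq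
  nlinarith

lemma hasDerivAt_gfun (hρ : 0 < ρ) :
    HasDerivAt (gfun β) (-gfun β ρ ^ 2 * (1 + gfun β ρ) / (1 + ρ * gfun β ρ ^ 2)) ρ := by
  have hdiscr : HasDerivAt (fun r => (r + β - 1) ^ 2 + 4 * r) (2 * (ρ + β - 1) + 4) ρ := by
    have := (((hasDerivAt_id ρ).add_const β).sub_const 1).fun_pow 2 |>.fun_add
      ((hasDerivAt_id ρ).const_mul 4)
    simpa using this
  have hnum := (((hasDerivAt_id ρ).const_sub 1).sub_const β).fun_add
    (hdiscr.sqrt (discr_pos hρ).ne')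
  have hquot := hnum.fun_div ((hasDerivAt_id ρ).const_mul 2) (by positivity)
  refine hquot.congr_deriv ?_
  have hrel := gfun_quadratic (β := β) hρ
  have hsqrt : 2 * ρ * gfun β ρ + (ρ + β - 1) ≠ 0 := by
    rw [← sqrt_discr_eq hρ]; exact (sqrt_pos.mpr (discr_pos hρ)).ne'
  simp only [id, sqrt_discr_eq hρ]
  set g := gfun β ρ
  field_simp
  linear_combination 4 * ρ * (ρ * g - 1) * hrel

end gfun

section ffun

variable {γ β ρ : ℝ}

lemma ffun_pos (hγ : 0 < γ) (hβ : 0 < β) (hρ : 0 < ρ) : 0 < ffun γ β ρ := by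
  have := gfun_pos (β := β) hρ
  unfold ffun; positivity

lemma hasDerivAt_ffun (hγ : 0 < γ) (hβ : 0 < β) (hρ : 0 < ρ) :
    HasDerivAt (ffun γ β)
      (-(2 * β ^ 2 * gfun β ρ ^ 3 / (1 + ρ * gfun β ρ ^ 2) ^ 3) * ffun γ β ρ ^ 2
        * (ρ / β - 1 / γ)) ρ := by
  have hg := hasDerivAt_gfun (β := β) hρ
  have hsq := (hg.const_add 1).fun_pow 2
  have hnum := (((hasDerivAt_id ρ).const_mul γ).div_const β).fun_mul hsq |>.const_add γ
  have hquot := (hg.fun_mul hnum).fun_div (hsq.const_add γ) (by positivity)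
  refine hquot.congr_deriv ?_
  have hrel := gfun_quadratic (β := β) hρ
  have hgpos := gfun_pos (β := β) hρ
  unfold ffun
  simp only [id]
  set g := gfun β ρ
  have hnum_val : γ + γ * ρ / β * (1 + g) ^ 2 = γ * (1 + g) * (1 + ρ * g ^ 2) / (g * β) := by
    field_simp
    linear_combination hrel
  rw [hnum_val]
  field_simp
  linear_combination -2 * g * (1 + g) * hrel

end ffun

lemma hasDerivAt_sum_mul_log_one_add_mul_ffun {ι : Type*} [Fintype ι] {β ρ : ℝ}
    (hβ : 0 < β) (hρ : 0 < ρ) (γ βv p : ι → ℝ) (hγ : ∀ j, 0 < γ j) (hp : ∀ j, 0 ≤ p j) :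
    HasDerivAt (fun r => ∑ j, βv j * log (1 + p j * ffun (γ j) β r))
      (-(2 * β ^ 2 * gfun β ρ ^ 3 / (1 + ρ * gfun β ρ ^ 2) ^ 3) *
        ∑ j, (βv j * p j * ffun (γ j) β ρ ^ 2 / (1 + p j * ffun (γ j) β ρ)) *
          (ρ / β - 1 / γ j)) ρ := by
  rw [Finset.mul_sum]
  refine HasDerivAt.fun_sum fun j _ => ?_
  have hlog := ((hasDerivAt_ffun (hγ j) hβ hρ).const_mul (p j)).const_add 1 |>.log
    (by nlinarith [hp j, ffun_pos (hγ j) hβ hρ] : 1 + p j * ffun (γ j) β ρ ≠ 0)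
  exact (hlog.const_mul (βv j)).congr_deriv (by ring)

theorem critical_point_condition_general (L : ℕ) (β : ℝ) (hβ : 0 < β)
    (γ : Fin L → ℝ) (hγpos : ∀ j, 0 < γ j)
    (βv p : Fin L → ℝ) (hp : ∀ j, 0 ≤ p j)
    (ρstar : ℝ) (hρstar : 0 < ρstar)
    (hcrit : HasDerivAt
      (fun r => ∑ j, βv j * Real.log (1 + p j * ffun (γ j) β r)) 0 ρstar) :
    ∑ j, (βv j * p j * (ffun (γ j) β ρstar) ^ 2 /
        (1 + p j * ffun (γ j) β ρstar)) * (ρstar / β - 1 / γ j) = 0 := by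
  have hκ : 0 < 2 * β ^ 2 * gfun β ρstar ^ 3 / (1 + ρstar * gfun β ρstar ^ 2) ^ 3 := by
    have := gfun_pos (β := β) hρstar
    positivity
  have hzero := hcrit.unique
    (hasDerivAt_sum_mul_log_one_add_mul_ffun hβ hρstar γ βv p hγpos hp)
  exact (mul_eq_zero.mp hzero.symm).resolve_left (neg_ne_zero.mpr hκ.ne')

/-- With R(ρ) := Σ_j β_j·log(1 + p_j·f(γ_j,β,ρ)), if ρ* > 0
is a critical point of R (R differentiable at ρ* with derivative zero), then
Σ_j (β_j p_j f(γ_j,β,ρ*)²/(1+p_j f(γ_j,β,ρ*)))·(ρ*/β − 1/γ_j) = 0. -/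
theorem critical_point_condition (L : ℕ) (hL : 1 ≤ L) (β : ℝ) (hβ : 0 < β)
    (γ : Fin L → ℝ) (hγpos : ∀ j, 0 < γ j)
    (hγsorted : ∀ i j : Fin L, i ≤ j → γ j ≤ γ i)
    (βv p : Fin L → ℝ) (hβv : ∀ j, 0 ≤ βv j) (hp : ∀ j, 0 ≤ p j)
    (hex : ∃ j, 0 < βv j * p j)
    (ρstar : ℝ) (hρstar : 0 < ρstar)
    (hcrit : HasDerivAt
      (fun r => ∑ j, βv j * Real.log (1 + p j * ffun (γ j) β r)) 0 ρstar) :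
    ∑ j, (βv j * p j * (ffun (γ j) β ρstar) ^ 2 /
        (1 + p j * ffun (γ j) β ρstar)) * (ρstar / β - 1 / γ j) = 0 :=
  critical_point_condition_general L β hβ γ hγpos βv p hp ρstar hρstar hcrit
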